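/- arXiv:2009.10440 — 2 statements merged into one kernel-verified Lean document; each statement's English description precedes it below -/
import Mathlib

section
/- For x > 0 define N(x) = e^{−2x}·sinh(x) − e^{−3x}·sinh(x)·sinh(2x)/sinh(3x), D₁(x) = e^{−x}·sinh(x) − e^{−3x}·sinh²(x)/sinh(3x), and D₂(x) = e^{−2x}·sinh(2x) − e^{−3x}·sinh²(2x)/sinh(3x). Then for all sufficiently small x > 0 one has D₁(x) > 0 and D₂(x) > 0, and the function g(x) := N(x)/√(D₁(x)·D₂(x)) satisfies g(x) = 1/2 − x²/4 + O(x⁴) as x → 0 from the right; in particular g(x) → 1/2 as x → 0⁺. -/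
open Filter Asymptotics

/-- `N(x) = e^{−2x}·sinh(x) − e^{−3x}·sinh(x)·sinh(2x)/sinh(3x)`. -/
noncomputable def Nfun (x : ℝ) : ℝ :=
  Real.exp (-2 * x) * Real.sinh x
    - Real.exp (-3 * x) * Real.sinh x * Real.sinh (2 * x) / Real.sinh (3 * x)

/-- `D₁(x) = e^{−x}·sinh(x) − e^{−3x}·sinh²(x)/sinh(3x)`. -/
noncomputable def D1 (x : ℝ) : ℝ :=
  Real.exp (-x) * Real.sinh x - Real.exp (-3 * x) * Real.sinh x ^ 2 / Real.sinh (3 * x)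

/-- `D₂(x) = e^{−2x}·sinh(2x) − e^{−3x}·sinh²(2x)/sinh(3x)`. -/
noncomputable def D2 (x : ℝ) : ℝ :=
  Real.exp (-2 * x) * Real.sinh (2 * x)
    - Real.exp (-3 * x) * Real.sinh (2 * x) ^ 2 / Real.sinh (3 * x)

lemma sinh_id1 (x : ℝ) :
    Real.exp (-x) * Real.sinh (3*x) - Real.exp (-3*x) * Real.sinh x = Real.sinh (2*x) := by
  simp only [Real.sinh_eq]
  rw [show (3:ℝ)*x = x + x + x by ring, show (2:ℝ)*x = x + x by ring,
    show (-3:ℝ)*x = -x + -x + -x by ring]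
  simp only [neg_add, Real.exp_add, Real.exp_neg]
  have h := Real.exp_ne_zero x
  field_simp
  ring

lemma sinh_id2 (x : ℝ) :
    Real.exp (-2*x) * Real.sinh (3*x) - Real.exp (-3*x) * Real.sinh (2*x) = Real.sinh x := by
  simp only [Real.sinh_eq]
  rw [show (3:ℝ)*x = x + x + x by ring, show (2:ℝ)*x = x + x by ring,
    show (-3:ℝ)*x = -x + -x + -x by ring, show (-2:ℝ)*x = -x + -x by ring]
  simp only [neg_add, Real.exp_add, Real.exp_neg]
  have h := Real.exp_ne_zero x
  field_simp
  ring

lemma D1_eq {x : ℝ} (hx : 0 < x) :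
    D1 x = Real.sinh x * Real.sinh (2*x) / Real.sinh (3*x) := by
  have h3 : Real.sinh (3*x) ≠ 0 := (Real.sinh_pos_iff.2 (by linarith : 0 < 3*x)).ne'
  rw [D1, eq_div_iff h3, sub_mul, div_mul_cancel₀ _ h3]
  linear_combination Real.sinh x * sinh_id1 x

lemma D2_eq {x : ℝ} (hx : 0 < x) :
    D2 x = Real.sinh x * Real.sinh (2*x) / Real.sinh (3*x) := by
  have h3 : Real.sinh (3*x) ≠ 0 := (Real.sinh_pos_iff.2 (by linarith : 0 < 3*x)).ne'
  rw [D2, eq_div_iff h3, sub_mul, div_mul_cancel₀ _ h3]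
  linear_combination Real.sinh (2*x) * sinh_id2 x

lemma Nfun_eq {x : ℝ} (hx : 0 < x) :
    Nfun x = Real.sinh x ^ 2 / Real.sinh (3*x) := by
  have h3 : Real.sinh (3*x) ≠ 0 := (Real.sinh_pos_iff.2 (by linarith : 0 < 3*x)).ne'
  rw [Nfun, eq_div_iff h3, sub_mul, div_mul_cancel₀ _ h3]
  linear_combination Real.sinh x * sinh_id2 x

lemma g_eq {x : ℝ} (hx : 0 < x) :
    Nfun x / Real.sqrt (D1 x * D2 x) = 1 / (2 * Real.cosh x) := by
  have h1 : (0:ℝ) < Real.sinh x := Real.sinh_pos_iff.2 hx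
  have h2 : (0:ℝ) < Real.sinh (2*x) := Real.sinh_pos_iff.2 (by linarith)
  have h3 : (0:ℝ) < Real.sinh (3*x) := Real.sinh_pos_iff.2 (by linarith)
  have hd : (0:ℝ) ≤ Real.sinh x * Real.sinh (2*x) / Real.sinh (3*x) := by positivity
  rw [Nfun_eq hx, D1_eq hx, D2_eq hx, Real.sqrt_mul_self hd, Real.sinh_two_mul]
  have hc : (0:ℝ) < Real.cosh x := Real.cosh_pos x
  field_simp

lemma cosh_lb (x : ℝ) (hx : 0 ≤ x) : 1 + x^2/2 ≤ Real.cosh x := by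
  have h := Real.self_le_sinh_iff.2 (by linarith : 0 ≤ x/2)
  have h2 : Real.cosh x = 2 * Real.sinh (x/2)^2 + 1 := by
    rw [show x = 2 * (x/2) by ring, Real.cosh_two_mul, Real.cosh_sq]; ring
  nlinarith

lemma cosh_ub (x : ℝ) (hx : 0 ≤ x) (hx1 : x ≤ 1) : Real.cosh x * (1 - x^2/2) ≤ 1 := by
  have h1 : Real.cosh x ≤ Real.exp (x^2/2) := Real.cosh_le_exp_half_sq x
  have h2 : 1 - x^2/2 ≤ Real.exp (-(x^2/2)) := by
    have := Real.add_one_le_exp (-(x^2/2)); linarith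
  have h3 : (0:ℝ) < 1 - x^2/2 := by nlinarith
  calc Real.cosh x * (1 - x^2/2) ≤ Real.exp (x^2/2) * Real.exp (-(x^2/2)) := by
        apply mul_le_mul h1 h2 (by linarith) (Real.exp_pos _).le
    _ = 1 := by rw [← Real.exp_add]; ring_nf; exact Real.exp_zero

lemma key_ineq (x : ℝ) (hx : 0 < x) (hx1 : x ≤ 1) :
    |1/(2*Real.cosh x) - (1/2 - x^2/4)| ≤ |x^4| := by
  have hc1 := cosh_lb x hx.le
  have hc2 := cosh_ub x hx.le hx1
  have hc0 : (1:ℝ) ≤ Real.cosh x := Real.one_le_cosh x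
  set c := Real.cosh x with hc
  have hcp : (0:ℝ) < c := by linarith
  have heq : 1/(2*c) - (1/2 - x^2/4) = (2 - c*(2-x^2))/(4*c) := by
    field_simp; ring
  rw [abs_of_nonneg (by positivity : (0:ℝ) ≤ x^4), abs_le, heq]
  have hx2 : (0:ℝ) ≤ 2 - x^2 := by nlinarith
  have hnum0 : 0 ≤ 2 - c*(2-x^2) := by nlinarith
  have hnum1 : 2 - c*(2-x^2) ≤ x^4/2 := by
    nlinarith [mul_le_mul_of_nonneg_right hc1 hx2]
  constructor
  · have : (0:ℝ) ≤ (2 - c*(2-x^2))/(4*c) := by positivity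
    nlinarith
  · rw [div_le_iff₀ (by linarith : (0:ℝ) < 4*c)]; nlinarith

/-- For all sufficiently small `x > 0` one has `D₁(x) > 0` and
`D₂(x) > 0`, and `g(x) := N(x)/√(D₁(x)·D₂(x))` satisfies
`g(x) = 1/2 − x²/4 + O(x⁴)` as `x → 0⁺`; in particular `g(x) → 1/2` as `x → 0⁺`. -/
theorem ou_partial_correlation_asymptotic :
    (∀ᶠ x in nhdsWithin (0 : ℝ) (Set.Ioi 0), 0 < D1 x ∧ 0 < D2 x) ∧
    ((fun x : ℝ => Nfun x / Real.sqrt (D1 x * D2 x) - (1 / 2 - x ^ 2 / 4))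
      =O[nhdsWithin (0 : ℝ) (Set.Ioi 0)] fun x : ℝ => x ^ 4) ∧
    Tendsto (fun x : ℝ => Nfun x / Real.sqrt (D1 x * D2 x))
      (nhdsWithin (0 : ℝ) (Set.Ioi 0)) (nhds (1 / 2)) := by
  have h01 : Set.Ioo (0:ℝ) 1 ∈ nhdsWithin (0:ℝ) (Set.Ioi 0) :=
    Ioo_mem_nhdsGT_of_mem (by constructor <;> norm_num)
  refine ⟨?_, ?_, ?_⟩
  · filter_upwards [self_mem_nhdsWithin] with x hx
    have hx : (0:ℝ) < x := hx
    have h1 : (0:ℝ) < Real.sinh x := Real.sinh_pos_iff.2 hx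
    have h2 : (0:ℝ) < Real.sinh (2*x) := Real.sinh_pos_iff.2 (by linarith)
    have h3 : (0:ℝ) < Real.sinh (3*x) := Real.sinh_pos_iff.2 (by linarith)
    rw [D1_eq hx, D2_eq hx]
    exact ⟨by positivity, by positivity⟩
  · rw [isBigO_iff]
    refine ⟨1, ?_⟩
    filter_upwards [h01] with x hx
    obtain ⟨hx0, hx1⟩ := hx
    rw [g_eq hx0, one_mul]
    simpa using key_ineq x hx0 hx1.le
  · have hcont : ContinuousAt (fun x : ℝ => 1 / (2 * Real.cosh x)) 0 := by
      apply ContinuousAt.div continuousAt_const (by fun_prop)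
      simp [Real.cosh_zero]
    have ht : Tendsto (fun x : ℝ => 1 / (2 * Real.cosh x))
        (nhdsWithin (0:ℝ) (Set.Ioi 0)) (nhds (1/2)) := by
      have := hcont.tendsto.mono_left (nhdsWithin_le_nhds (s := Set.Ioi (0:ℝ)))
      simpa [Real.cosh_zero] using this
    refine ht.congr' ?_
    filter_upwards [self_mem_nhdsWithin] with x hx
    exact (g_eq hx).symm
end

section
/- Let (Ω, 𝔉, P) be a probability space, E a measurable space, (Y_i)_{i≥1} an i.i.d. sequence of E-valued random variables, and (U_i)_{i≥1} an i.i.d. sequence of random variables uniformly distributed on [0, 1], with the whole family (Y_i, U_i)_{i≥1} independent. Let p : E → [0, 1] and c : E → [0, ∞) be measurable with 0 < E[p(Y₁)] and E[c(Y₁)] < ∞. Define N := inf{ i ≥ 1 : U_i ≤ p(Y_i) }. Then N is finite almost surely, and E[Σ_{i=1}^{N} c(Y_i)] = E[c(Y₁)]/E[p(Y₁)]. -/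
open MeasureTheory ProbabilityTheory

/-- The index-dependent codomain of the joint family `(Y_i, U_i)_{i≥1}`:
`inl i` indexes the proposal `Y_i` (valued in `E`) and `inr i` the uniform
variable `U_i` (valued in `ℝ`). -/
def famType (E : Type) : ℕ ⊕ ℕ → Type _ := fun k => Sum.elim (fun _ => E) (fun _ => ℝ) k

/-- The measurable-space structure on the joint family. -/
def famMS {E : Type} (mE : MeasurableSpace E) :
    ∀ k : ℕ ⊕ ℕ, MeasurableSpace (famType E k)
  | Sum.inl _ => mE
  | Sum.inr _ => Real.measurableSpace

/-- The joint family of random variables `(Y_i, U_i)_{i≥1}`. -/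
def famFun {Ω : Type*} {E : Type} (Y : ℕ → Ω → E) (U : ℕ → Ω → ℝ) :
    ∀ k : ℕ ⊕ ℕ, Ω → famType E k
  | Sum.inl i => Y i
  | Sum.inr i => U i

open scoped ENNReal
open Filter Topology Finset

/-!
Let `N` be the index of the first accepted proposal and `q = E[p(Y₁)]`. Given `Y_i`, the uniform
`U_i` falls below `p(Y_i)` with probability `p(Y_i)`, so every trial accepts with probability `q`.
The event `{N ≥ i}` that the first `i` trials are rejected is determined by those trials, hence
independent of the `i`-th one; by induction it has probability `(1 - q)^i`, which tends to `0`, so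
`N < ∞` almost surely. Writing the cost as `∑_i 1{N ≥ i} c(Y_i)` and using this independence term
by term gives `E[c(Y₁)] ∑_i (1 - q)^i = E[c(Y₁)] / q`.
-/

lemma Nat.sum_range_sInf_succ_eq_tsum {M : Type*} [AddCommMonoid M] [TopologicalSpace M]
    {S : Set ℕ} (hS : S.Nonempty) (f : ℕ → M) :
    ∑ i ∈ range (sInf S + 1), f i = ∑' i, {i | ∀ j < i, j ∉ S}.indicator f i := by
  have hmem : ∀ i, i ∈ {i | ∀ j < i, j ∉ S} ↔ i ∈ range (sInf S + 1) := fun i => by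
    simp only [Set.mem_ofPred_eq, mem_range, Nat.lt_succ_iff, le_csInf_iff' hS, mem_lowerBounds]
    exact forall_congr' fun j => by rw [imp_not_comm, not_lt]
  rw [tsum_eq_sum (s := range (sInf S + 1)) fun i hi =>
    Set.indicator_of_notMem (mt (hmem i).1 hi) f]
  exact sum_congr rfl fun i hi => (Set.indicator_of_mem ((hmem i).2 hi) f).symm

section Trials

variable {Ω F : Type*} {Z : ℕ → Ω → F} {A : Set F}

-- The event `{N ≥ i}`, where `N` is the first index with `Z N ∈ A`.
def rejectedBefore (Z : ℕ → Ω → F) (A : Set F) (i : ℕ) : Set Ω := {ω | ∀ j < i, Z j ω ∉ A}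

lemma rejectedBefore_succ (i : ℕ) :
    rejectedBefore Z A (i + 1) = rejectedBefore Z A i ∩ Z i ⁻¹' Aᶜ := by
  ext ω
  exact Nat.forall_lt_succ_right

variable {mΩ : MeasurableSpace Ω} [mF : MeasurableSpace F] {P : Measure Ω}

lemma measurableSet_iSup_comap_rejectedBefore (hA : MeasurableSet A) (i : ℕ) :
    MeasurableSet[⨆ j < i, mF.comap (Z j)] (rejectedBefore Z A i) := by
  have : rejectedBefore Z A i = ⋂ j, ⋂ _ : j < i, Z j ⁻¹' Aᶜ := by
    ext ω
    simp [rejectedBefore]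
  rw [this]
  refine MeasurableSet.iInter fun j => MeasurableSet.iInter fun hj => ?_
  exact le_iSup₂ (f := fun j (_ : j < i) => mF.comap (Z j)) j hj _ ⟨Aᶜ, hA.compl, rfl⟩

lemma measurableSet_rejectedBefore (hZ : ∀ i, Measurable (Z i)) (hA : MeasurableSet A) (i : ℕ) :
    MeasurableSet (rejectedBefore Z A i) :=
  iSup₂_le (fun j _ => (hZ j).comap_le) _ (measurableSet_iSup_comap_rejectedBefore hA i)

variable (hZ : ∀ i, Measurable (Z i)) (hA : MeasurableSet A)
  (hindep : ∀ i, Indep (⨆ j < i, mF.comap (Z j)) (mF.comap (Z i)) P)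
include hZ hA hindep

lemma setLIntegral_rejectedBefore {g : F → ℝ≥0∞} (hg : Measurable g) (i : ℕ) :
    ∫⁻ ω in rejectedBefore Z A i, g (Z i ω) ∂P
      = P (rejectedBefore Z A i) * ∫⁻ ω, g (Z i ω) ∂P := by
  have hpast : (⨆ j < i, mF.comap (Z j)) ≤ mΩ := iSup₂_le fun j _ => (hZ j).comap_le
  have hR := measurableSet_iSup_comap_rejectedBefore (Z := Z) hA i
  calc ∫⁻ ω in rejectedBefore Z A i, g (Z i ω) ∂P
      = ∫⁻ ω, (rejectedBefore Z A i).indicator 1 ω * g (Z i ω) ∂P := by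
        rw [← lintegral_indicator (hpast _ hR)]
        congr 1 with ω
        by_cases hω : ω ∈ rejectedBefore Z A i <;> simp [hω]
    _ = P (rejectedBefore Z A i) * ∫⁻ ω, g (Z i ω) ∂P := by
        rw [lintegral_mul_eq_lintegral_mul_lintegral_of_independent_measurableSpace
          (f := (rejectedBefore Z A i).indicator 1) (g := fun ω => g (Z i ω)) hpast
          (hZ i).comap_le (hindep i) (measurable_const.indicator hR)
          (hg.comp (comap_measurable (Z i))), lintegral_indicator_one (hpast _ hR)]

lemma measure_rejectedBefore [IsProbabilityMeasure P] {q : ℝ≥0∞}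
    (hq : ∀ i, P (Z i ⁻¹' A) = q) (i : ℕ) :
    P (rejectedBefore Z A i) = (1 - q) ^ i := by
  induction i with
  | zero => simp [rejectedBefore]
  | succ i ih =>
    rw [rejectedBefore_succ, (Indep_iff _ _ P).1 (hindep i) _ _
      (measurableSet_iSup_comap_rejectedBefore hA i) ⟨Aᶜ, hA.compl, rfl⟩, ih, Set.preimage_compl,
      prob_compl_eq_one_sub (hZ i hA), hq, pow_succ]

lemma ae_exists_mem [IsProbabilityMeasure P] {q : ℝ≥0∞} (hq : ∀ i, P (Z i ⁻¹' A) = q)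
    (hq0 : q ≠ 0) : ∀ᵐ ω ∂P, ∃ i, Z i ω ∈ A := by
  have hlim : Tendsto (fun n => (1 - q) ^ n) atTop (𝓝 0) :=
    ENNReal.tendsto_pow_atTop_nhds_zero_of_lt_one
      (ENNReal.sub_lt_self ENNReal.one_ne_top one_ne_zero hq0)
  rw [ae_iff]
  refine le_antisymm (ge_of_tendsto' hlim fun n => ?_) bot_le
  rw [← measure_rejectedBefore hZ hA hindep hq n]
  exact measure_mono fun ω hω j _ hj => hω ⟨j, hj⟩

lemma sum_range_sInf_succ_ae_eq_tsum [IsProbabilityMeasure P] {q : ℝ≥0∞}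
    (hq : ∀ i, P (Z i ⁻¹' A) = q) (hq0 : q ≠ 0) (g : F → ℝ≥0∞) :
    (fun ω => ∑ i ∈ range (sInf {i | Z i ω ∈ A} + 1), g (Z i ω))
      =ᵐ[P] fun ω => ∑' i, (rejectedBefore Z A i).indicator (fun ω => g (Z i ω)) ω := by
  filter_upwards [ae_exists_mem hZ hA hindep hq hq0] with ω ⟨i, hi⟩
  exact Nat.sum_range_sInf_succ_eq_tsum ⟨i, hi⟩ _

lemma lintegral_sum_range_sInf_succ [IsProbabilityMeasure P] {q : ℝ≥0∞}
    (hq : ∀ i, P (Z i ⁻¹' A) = q) (hq0 : q ≠ 0) {g : F → ℝ≥0∞} (hg : Measurable g)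
    {C : ℝ≥0∞} (hC : ∀ i, ∫⁻ ω, g (Z i ω) ∂P = C) :
    ∫⁻ ω, ∑ i ∈ range (sInf {i | Z i ω ∈ A} + 1), g (Z i ω) ∂P = C / q := by
  have hq1 : q ≤ 1 := hq 0 ▸ prob_le_one
  calc ∫⁻ ω, ∑ i ∈ range (sInf {i | Z i ω ∈ A} + 1), g (Z i ω) ∂P
      = ∫⁻ ω, ∑' i, (rejectedBefore Z A i).indicator (fun ω => g (Z i ω)) ω ∂P :=
        lintegral_congr_ae (sum_range_sInf_succ_ae_eq_tsum hZ hA hindep hq hq0 g)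
    _ = ∑' i, (1 - q) ^ i * C := by
        rw [lintegral_tsum
          (f := fun i ω => (rejectedBefore Z A i).indicator (fun ω => g (Z i ω)) ω)
          fun i => ((hg.comp (hZ i)).indicator
            (measurableSet_rejectedBefore hZ hA i)).aemeasurable]
        congr 1 with i
        rw [lintegral_indicator (measurableSet_rejectedBefore hZ hA i),
          setLIntegral_rejectedBefore hZ hA hindep hg, measure_rejectedBefore hZ hA hindep hq, hC]
    _ = C / q := by
        rw [ENNReal.tsum_mul_right, ENNReal.tsum_geometric,
          ENNReal.sub_sub_cancel ENNReal.one_ne_top hq1, div_eq_mul_inv, mul_comm]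

theorem integral_sum_range_sInf_succ [IsProbabilityMeasure P] {q : ℝ≥0∞}
    (hq : ∀ i, P (Z i ⁻¹' A) = q) (hq0 : q ≠ 0) {g : F → ℝ} (hg : Measurable g)
    (hg0 : ∀ x, 0 ≤ g x) (hgi : ∀ i, Integrable (fun ω => g (Z i ω)) P) {C : ℝ}
    (hC : ∀ i, ∫ ω, g (Z i ω) ∂P = C) :
    ∫ ω, ∑ i ∈ range (sInf {i | Z i ω ∈ A} + 1), g (Z i ω) ∂P = C / q.toReal := by
  set G : F → ℝ≥0∞ := fun x => ENNReal.ofReal (g x)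
  have hGC : ∀ i, ∫⁻ ω, G (Z i ω) ∂P = ENNReal.ofReal C := fun i => by
    rw [← hC i, ofReal_integral_eq_lintegral_ofReal (hgi i) (ae_of_all _ fun ω => hg0 _)]
  have hsum : ∀ ω, ∑ i ∈ range (sInf {i | Z i ω ∈ A} + 1), g (Z i ω)
      = (∑ i ∈ range (sInf {i | Z i ω ∈ A} + 1), G (Z i ω)).toReal := fun ω => by
    rw [ENNReal.toReal_sum fun _ _ => ENNReal.ofReal_ne_top]
    exact sum_congr rfl fun i _ => (ENNReal.toReal_ofReal (hg0 _)).symm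
  have hmeas : AEMeasurable (fun ω => ∑ i ∈ range (sInf {i | Z i ω ∈ A} + 1), G (Z i ω)) P :=
    (Measurable.tsum fun i => (hg.ennreal_ofReal.comp (hZ i)).indicator
      (measurableSet_rejectedBefore hZ hA i)).aemeasurable.congr
      (sum_range_sInf_succ_ae_eq_tsum hZ hA hindep hq hq0 G).symm
  have hC0 : 0 ≤ C := hC 0 ▸ integral_nonneg fun ω => hg0 _
  simp_rw [hsum]
  rw [integral_toReal hmeas (ae_of_all _ fun ω => ENNReal.sum_lt_top.2 fun _ _ =>
      ENNReal.ofReal_lt_top), lintegral_sum_range_sInf_succ hZ hA hindep hq hq0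
      hg.ennreal_ofReal hGC, ENNReal.toReal_div, ENNReal.toReal_ofReal hC0]

end Trials

lemma measure_le_comp_eq_lintegral_of_uniform {Ω E : Type*} {mΩ : MeasurableSpace Ω}
    [MeasurableSpace E] {P : Measure Ω} [IsFiniteMeasure P] {X : Ω → E} {V : Ω → ℝ}
    (hX : Measurable X) (hV : Measurable V) (hXV : IndepFun X V P)
    (hV_unif : P.map V = volume.restrict (Set.Icc 0 1)) {p : E → ℝ} (hp : Measurable p)
    (hp1 : ∀ x, p x ≤ 1) :
    P {ω | V ω ≤ p (X ω)} = ∫⁻ ω, ENNReal.ofReal (p (X ω)) ∂P := by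
  have hS : MeasurableSet {xv : E × ℝ | xv.2 ≤ p xv.1} :=
    measurableSet_le measurable_snd (hp.comp measurable_fst)
  have hslice : ∀ x, volume.restrict (Set.Icc (0 : ℝ) 1) (Set.Iic (p x)) = ENNReal.ofReal (p x) :=
    fun x => by
      have hcut : Set.Iic (p x) ∩ Set.Icc 0 1 = Set.Icc 0 (p x) := by
        ext u
        simp only [Set.mem_inter_iff, Set.mem_Iic, Set.mem_Icc]
        grind [hp1 x]
      rw [Measure.restrict_apply measurableSet_Iic, hcut, Real.volume_Icc, sub_zero]
  calc P {ω | V ω ≤ p (X ω)} = P.map (fun ω => (X ω, V ω)) {xv | xv.2 ≤ p xv.1} :=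
        (Measure.map_apply (hX.prodMk hV) hS).symm
    _ = ((P.map X).prod (volume.restrict (Set.Icc 0 1))) {xv | xv.2 ≤ p xv.1} := by
        rw [(indepFun_iff_map_prod_eq_prod_map_map hX.aemeasurable hV.aemeasurable).1 hXV,
          hV_unif]
    _ = ∫⁻ x, ENNReal.ofReal (p x) ∂P.map X := by
        rw [Measure.prod_apply hS]
        exact lintegral_congr fun x => hslice x
    _ = ∫⁻ ω, ENNReal.ofReal (p (X ω)) ∂P := lintegral_map hp.ennreal_ofReal hX

lemma indep_iSup_comap_famFun_pair {Ω : Type*} {E : Type} {mΩ : MeasurableSpace Ω}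
    [mE : MeasurableSpace E] {P : Measure Ω} {Y : ℕ → Ω → E} {U : ℕ → Ω → ℝ}
    (hY : ∀ i, Measurable (Y i)) (hU : ∀ i, Measurable (U i))
    (hindep : iIndepFun (m := famMS mE) (famFun Y U) P) (i : ℕ) :
    Indep (⨆ j < i, (mE.prod Real.measurableSpace).comap fun ω => (Y j ω, U j ω))
      ((mE.prod Real.measurableSpace).comap fun ω => (Y i ω, U i ω)) P := by
  let idx : ℕ ⊕ ℕ → ℕ := Sum.elim id id
  let M : ℕ ⊕ ℕ → MeasurableSpace Ω := fun k => (famMS mE k).comap (famFun Y U k)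
  have h := indep_iSup_of_disjoint (m := M)
    (by rintro (j | j); exacts [(hY j).comap_le, (hU j).comap_le])
    ((iIndepFun_iff_iIndep _ _ _).1 hindep) (S := {k | idx k < i}) (T := {k | idx k = i})
    (Set.disjoint_left.2 fun k hlt heq => hlt.ne heq)
  refine indep_of_indep_of_le_right (indep_of_indep_of_le_left h ?_) ?_
  · refine iSup₂_le fun j hj => ?_
    rw [MeasurableSpace.comap_prodMk]
    exact sup_le (le_iSup₂ (f := fun k (_ : idx k < i) => M k) (Sum.inl j) hj)
      (le_iSup₂ (f := fun k (_ : idx k < i) => M k) (Sum.inr j) hj)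
  · rw [MeasurableSpace.comap_prodMk]
    exact sup_le (le_iSup₂ (f := fun k (_ : idx k = i) => M k) (Sum.inl i) rfl)
      (le_iSup₂ (f := fun k (_ : idx k = i) => M k) (Sum.inr i) rfl)

/-- Let `(Y_i)_{i≥1}` be i.i.d. `E`-valued, `(U_i)_{i≥1}` i.i.d. uniform
on `[0,1]`, the whole family `(Y_i, U_i)_{i≥1}` mutually independent (here indexed by
`ℕ` starting from `0`, i.e. `Y i` stands for `Y_{i+1}`). Let `p : E → [0,1]` and
`c : E → [0,∞)` be measurable with `0 < E[p(Y₁)]` and `E[c(Y₁)] < ∞`. Define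
`N := inf {i ≥ 1 : U_i ≤ p(Y_i)}`. Then `N` is finite almost surely and
`E[Σ_{i=1}^N c(Y_i)] = E[c(Y₁)]/E[p(Y₁)]`. -/
theorem rejection_sampler_expected_cost
    {Ω : Type*} {E : Type} [MeasurableSpace Ω] [mE : MeasurableSpace E]
    (P : Measure Ω) [IsProbabilityMeasure P]
    (Y : ℕ → Ω → E) (U : ℕ → Ω → ℝ)
    (hYmeas : ∀ i, Measurable (Y i)) (hUmeas : ∀ i, Measurable (U i))
    (hYid : ∀ i, IdentDistrib (Y i) (Y 0) P P)
    (hUunif : ∀ i, Measure.map (U i) P = volume.restrict (Set.Icc (0 : ℝ) 1))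
    (hindep : iIndepFun (m := famMS mE) (famFun Y U) P)
    (p c : E → ℝ)
    (hpmeas : Measurable p) (hcmeas : Measurable c)
    (hp01 : ∀ x, p x ∈ Set.Icc (0 : ℝ) 1) (hc0 : ∀ x, 0 ≤ c x)
    (hppos : 0 < ∫ ω, p (Y 0 ω) ∂P)
    (hcint : Integrable (fun ω => c (Y 0 ω)) P) :
    (∀ᵐ ω ∂P, {i : ℕ | U i ω ≤ p (Y i ω)}.Nonempty) ∧
    ∫ ω, (∑ i ∈ Finset.range (sInf {i : ℕ | U i ω ≤ p (Y i ω)} + 1), c (Y i ω)) ∂P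
      = (∫ ω, c (Y 0 ω) ∂P) / ∫ ω, p (Y 0 ω) ∂P := by
  set Z : ℕ → Ω → E × ℝ := fun i ω => (Y i ω, U i ω)
  set A : Set (E × ℝ) := {yu | yu.2 ≤ p yu.1}
  have hZ : ∀ i, Measurable (Z i) := fun i => (hYmeas i).prodMk (hUmeas i)
  have hA : MeasurableSet A := measurableSet_le measurable_snd (hpmeas.comp measurable_fst)
  have hpast := indep_iSup_comap_famFun_pair hYmeas hUmeas hindep
  have hpint : Integrable (fun ω => p (Y 0 ω)) P :=
    .of_bound (hpmeas.comp (hYmeas 0)).aestronglyMeasurable 1 (ae_of_all _ fun ω => by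
      rw [Real.norm_of_nonneg (hp01 _).1]; exact (hp01 _).2)
  have hq : ∀ i, P (Z i ⁻¹' A) = ENNReal.ofReal (∫ ω, p (Y 0 ω) ∂P) := fun i => by
    rw [ofReal_integral_eq_lintegral_ofReal hpint (ae_of_all _ fun ω => (hp01 _).1)]
    exact (measure_le_comp_eq_lintegral_of_uniform (hYmeas i) (hUmeas i)
      (hindep.indepFun Sum.inl_ne_inr) (hUunif i) hpmeas fun x => (hp01 x).2).trans
      ((hYid i).comp hpmeas.ennreal_ofReal).lintegral_eq
  have hq0 : ENNReal.ofReal (∫ ω, p (Y 0 ω) ∂P) ≠ 0 := (ENNReal.ofReal_pos.2 hppos).ne'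
  refine ⟨ae_exists_mem hZ hA hpast hq hq0, ?_⟩
  rw [← ENNReal.toReal_ofReal hppos.le]
  exact integral_sum_range_sInf_succ hZ hA hpast hq hq0 (g := fun x => c x.1)
    (hcmeas.comp measurable_fst) (fun x => hc0 x.1)
    (fun i => ((hYid i).comp hcmeas).integrable_iff.2 hcint)
    (fun i => ((hYid i).comp hcmeas).integral_eq)
end
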